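/- For every binary tree A on j ≥ 4 nodes, the proportion of permutations of {1,...,j} whose Cartesian tree equals A satisfies p(A)/j! ≤ 4/(j(j-2)(j-3)). -/

import Mathlib

/-- Binary tree shapes (Cartesian trees are determined by their shape). -/
inductive BTree : Type
  | nil : BTree
  | node : BTree → BTree → BTree
deriving DecidableEq

namespace BTree

/-- Number of nodes. -/
def size : BTree → ℕ
  | nil => 0
  | node l r => size l + size r + 1

/-- Length of the leftmost path. -/
def LMP : BTree → ℕ
  | nil => 0
  | node l _ => LMP l + 1

/-- Length of the rightmost path. -/
def RMP : BTree → ℕ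
  | nil => 0
  | node _ r => RMP r + 1

end BTree

/-- Minimum value of a list (0 for the empty list). -/
def listMin : List ℤ → ℤ
  | [] => 0
  | a :: t => t.foldl min a

/-- Index (0-based) of the minimum of a list. -/
def minIdx (l : List ℤ) : ℕ := l.idxOf (listMin l)

/-- Cartesian tree of a list, with fuel for termination. -/
def ctreeAux : ℕ → List ℤ → BTree
  | 0, _ => .nil
  | _ + 1, [] => .nil
  | n + 1, a :: t =>
      let g := minIdx (a :: t)
      .node (ctreeAux n ((a :: t).take g)) (ctreeAux n ((a :: t).drop (g + 1)))

/-- Cartesian tree of a list: the root is the position of the minimum,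
its subtrees are the Cartesian trees of the prefix and suffix around it. -/
def ctreeL (l : List ℤ) : BTree := ctreeAux l.length l

/-- The factor x[a..b] (1-based positions) of a sequence, as a list. -/
def seqList (x : ℕ → ℤ) (a b : ℕ) : List ℤ :=
  (List.range (b + 1 - a)).map (fun k => x (a + k))

/-- Cartesian tree of the sequence x[1..m]. -/
def ctreeOf (m : ℕ) (x : ℕ → ℤ) : BTree := ctreeL (seqList x 1 m)

/-- Positions j < h (1-based) with x[j] < x[h]. -/
def PDset (x : ℕ → ℤ) (h : ℕ) : Finset ℕ :=
  (Finset.Ico 1 h).filter (fun j => x j < x h)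

/-- Parent-distance table: PD_x[h] = h - max{j < h : x[j] < x[h]}, 0 if no such j. -/
def PD (x : ℕ → ℤ) (h : ℕ) : ℕ :=
  if hs : (PDset x h).Nonempty then h - (PDset x h).max' hs else 0

/-- Positions h < j ≤ m with x[j] < x[h]. -/
def RPDset (m : ℕ) (x : ℕ → ℤ) (h : ℕ) : Finset ℕ :=
  (Finset.Ioc h m).filter (fun j => x j < x h)

/-- Reverse parent-distance table: RPD_x[h] = min{j > h : x[j] < x[h]} - h, 0 if no such j. -/
def RPD (m : ℕ) (x : ℕ → ℤ) (h : ℕ) : ℕ :=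
  if hs : (RPDset m x h).Nonempty then (RPDset m x h).min' hs - h else 0

/-- Referent of h: the smallest position j > h with x[j] < x[h], or -1 if none. -/
def refD (m : ℕ) (x : ℕ → ℤ) (h : ℕ) : ℤ :=
  if hs : (RPDset m x h).Nonempty then ((RPDset m x h).min' hs : ℤ) else -1

/-- Skipped-number table: SN_x[h] is the number of nodes on the rightmost path of the
left subtree of node h in C(x), i.e. the number of positions whose referent is h. -/
def SN (m : ℕ) (x : ℕ → ℤ) (h : ℕ) : ℕ :=
  ((Finset.Ico 1 h).filter (fun j => refD m x j = (h : ℤ))).card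

/-- The swap τ(x,i): exchange the entries at positions i and i+1. -/
def swapAt (x : ℕ → ℤ) (i : ℕ) : ℕ → ℤ :=
  fun j => if j = i then x (i + 1) else if j = i + 1 then x i else x j

/-- ng(T,i): the Cartesian trees obtained from a sequence realizing T by one swap
at position i (valid positions are 1 ≤ i ≤ m-1). -/
def ngi (m : ℕ) (T : BTree) (i : ℕ) : Set BTree :=
  { S | 1 ≤ i ∧ i + 1 ≤ m ∧ ∃ x : ℕ → ℤ, Set.InjOn x (Set.Icc 1 m) ∧
        ctreeOf m x = T ∧ S = ctreeOf m (swapAt x i) }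

/-- ng(T): the swap neighbourhood of T. -/
def ng (m : ℕ) (T : BTree) : Set BTree := ⋃ i, ngi m T i

/-- Number of permutations of {1,...,n} whose Cartesian tree is A. -/
noncomputable def permCount (n : ℕ) (A : BTree) : ℕ :=
  Set.ncard { σ : Equiv.Perm (Fin n) |
    ctreeL (List.ofFn (fun k : Fin n => ((σ k : ℕ) : ℤ) + 1)) = A }

/-- Product over all nodes t of A of the size of the subtree rooted at t. -/
def hookProd : BTree → ℕ
  | .nil => 1
  | .node l r => (BTree.node l r).size * hookProd l * hookProd r

/-!
A list with Cartesian tree `node L R` is `p ++ m :: q`, where `m` is its minimum and `p`, `q`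
have Cartesian trees `L`, `R`. Counting such enumerations of an arbitrary `n`-element set of
values, the entries of `p` form an `L.size`-subset of the other `n - 1` values, so
`p(node L R) ≤ C(n - 1, L.size) p(L) p(R)` and by induction `p(A) ∏ s(t) ≤ n!`. It remains to
show `n (n - 2) (n - 3) ≤ 4 ∏ s(t)`, which follows at the root from the same bound one degree
lower, `n (n - 1) ≤ 2 ∏ s(t)`, applied to the two subtrees.
-/

open scoped Nat

lemma listMin_eq_min {l : List ℤ} (h : l ≠ []) : listMin l = l.min h := by
  cases l with
  | nil => exact absurd rfl h
  | cons a t => rfl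

lemma minIdx_lt_length {l : List ℤ} (h : l ≠ []) : minIdx l < l.length :=
  List.idxOf_lt_length_iff.2 (listMin_eq_min h ▸ List.min_mem h)

lemma getElem_minIdx {l : List ℤ} (h : l ≠ []) : l[minIdx l]'(minIdx_lt_length h) = listMin l :=
  List.getElem_idxOf _

lemma ctreeAux_eq_ctreeL {n : ℕ} {l : List ℤ} (hl : l.length ≤ n) :
    ctreeAux n l = ctreeL l := by
  induction n using Nat.strong_induction_on generalizing l with
  | _ n ih =>
    match n, l with
    | 0, [] | _ + 1, [] => rfl
    | n + 1, a :: t =>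
      have hg := minIdx_lt_length (List.cons_ne_nil a t)
      have htake : ((a :: t).take (minIdx (a :: t))).length ≤ t.length := by grind
      have hdrop : ((a :: t).drop (minIdx (a :: t) + 1)).length ≤ t.length := by grind
      simp only [List.length_cons] at hl
      simp only [ctreeL, List.length_cons, ctreeAux]
      rw [ih n (by omega) (htake.trans (by omega)), ih n (by omega) (hdrop.trans (by omega)),
        ih _ (by omega) htake, ih _ (by omega) hdrop]

lemma ctreeL_of_ne_nil {l : List ℤ} (h : l ≠ []) :
    ctreeL l = .node (ctreeL (l.take (minIdx l))) (ctreeL (l.drop (minIdx l + 1))) := by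
  obtain ⟨a, t, rfl⟩ := List.exists_cons_of_ne_nil h
  have hg := minIdx_lt_length h
  rw [ctreeL, List.length_cons, ctreeAux, ctreeAux_eq_ctreeL (by grind),
    ctreeAux_eq_ctreeL (by grind)]

lemma size_ctreeL (l : List ℤ) : (ctreeL l).size = l.length := by
  induction h : l.length using Nat.strong_induction_on generalizing l with
  | _ n ih =>
    rcases eq_or_ne l [] with rfl | hne
    · subst h; rfl
    have hg := minIdx_lt_length hne
    rw [ctreeL_of_ne_nil hne, BTree.size, ih _ (by grind) _ rfl, ih _ (by grind) _ rfl]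
    grind

lemma ctreeL_eq_node {l : List ℤ} {L R : BTree} (h : ctreeL l = .node L R) :
    l.take L.size ++ listMin l :: l.drop (L.size + 1) = l ∧
      ctreeL (l.take L.size) = L ∧ ctreeL (l.drop (L.size + 1)) = R := by
  have hne : l ≠ [] := by rintro rfl; simp [ctreeL, ctreeAux] at h
  have hg := minIdx_lt_length hne
  rw [ctreeL_of_ne_nil hne, BTree.node.injEq] at h
  obtain ⟨hL, hR⟩ := h
  have hsize : L.size = minIdx l := by rw [← hL, size_ctreeL, List.length_take]; omega
  rw [hsize, ← getElem_minIdx hne, ← List.drop_eq_getElem_cons, List.take_append_drop]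
  exact ⟨rfl, hL, hR⟩

def treeArrangements (s : Finset ℤ) (A : BTree) : Finset (List ℤ) :=
  s.val.lists.toFinset.filter (fun l => ctreeL l = A)

lemma Finset.val_eq_coe_iff {α : Type*} [DecidableEq α] {s : Finset α} {l : List α} :
    s.val = l ↔ l.Nodup ∧ l.toFinset = s := by
  refine ⟨fun h => ?_, fun ⟨hl, hs⟩ => ?_⟩
  · have hl : l.Nodup := Multiset.coe_nodup.1 (h ▸ s.nodup)
    exact ⟨hl, Finset.val_inj.1 (by rw [List.toFinset_val, hl.dedup, h])⟩
  · rw [← hs, List.toFinset_val, hl.dedup]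

lemma mem_treeArrangements {s : Finset ℤ} {A : BTree} {l : List ℤ} :
    l ∈ treeArrangements s A ↔ l.Nodup ∧ l.toFinset = s ∧ ctreeL l = A := by
  simp [treeArrangements, Finset.val_eq_coe_iff, and_assoc]

lemma treeArrangements_eq_empty {s : Finset ℤ} {A : BTree} (h : s.card ≠ A.size) :
    treeArrangements s A = ∅ := by
  refine Finset.eq_empty_of_forall_notMem fun l hl => h ?_
  obtain ⟨hnd, rfl, rfl⟩ := mem_treeArrangements.1 hl
  rw [List.toFinset_card_of_nodup hnd, size_ctreeL]

lemma card_treeArrangements_nil_le_one (s : Finset ℤ) : (treeArrangements s .nil).card ≤ 1 := by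
  refine Finset.card_le_one.2 fun l hl l' hl' => ?_
  have hsize : ∀ l ∈ treeArrangements s .nil, l = [] := fun l hl => by
    simpa [size_ctreeL, BTree.size] using congrArg BTree.size (mem_treeArrangements.1 hl).2.2
  rw [hsize l hl, hsize l' hl']

lemma listMin_eq_min' {l : List ℤ} {s : Finset ℤ} (hl : l.toFinset = s) (hs : s.Nonempty) :
    listMin l = s.min' hs := by
  have hmem : ∀ x, x ∈ l ↔ x ∈ s := fun x => by rw [← hl, List.mem_toFinset]
  have hne : l ≠ [] := fun h => by simp [h] at hl; exact hs.ne_empty hl.symm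
  rw [listMin_eq_min hne, List.min_eq_iff]
  exact ⟨(hmem _).2 (s.min'_mem hs), fun b hb => s.min'_le b ((hmem b).1 hb)⟩

lemma toFinset_subset_erase_of_nodup {α : Type*} [DecidableEq α] {p q : List α} {m : α}
    (h : (p ++ m :: q).Nodup) :
    p.toFinset ⊆ (p ++ m :: q).toFinset.erase m := by
  intro x hx
  simp only [List.nodup_append, List.nodup_cons] at h
  simp only [List.mem_toFinset] at hx
  simp only [Finset.mem_erase, List.mem_toFinset, List.mem_append, List.mem_cons]
  grind

lemma toFinset_eq_erase_sdiff_of_nodup {α : Type*} [DecidableEq α] {p q : List α} {m : α}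
    (h : (p ++ m :: q).Nodup) :
    q.toFinset = (p ++ m :: q).toFinset.erase m \ p.toFinset := by
  ext x
  simp only [List.nodup_append, List.nodup_cons] at h
  simp only [Finset.mem_sdiff, Finset.mem_erase, List.mem_toFinset, List.mem_append, List.mem_cons]
  grind

lemma card_treeArrangements_node_le {s : Finset ℤ} (hs : s.Nonempty) (L R : BTree) :
    (treeArrangements s (.node L R)).card ≤
      ∑ T ∈ (s.erase (s.min' hs)).powersetCard L.size,
        (treeArrangements T L).card * (treeArrangements (s.erase (s.min' hs) \ T) R).card := by
  classical
  set m := s.min' hs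
  set U := s.erase m
  have hsplit : ∀ l ∈ treeArrangements s (.node L R),
      l.take L.size ++ m :: l.drop (L.size + 1) = l ∧
        ctreeL (l.take L.size) = L ∧ ctreeL (l.drop (L.size + 1)) = R := fun l hl => by
    obtain ⟨-, hls, htree⟩ := mem_treeArrangements.1 hl
    simpa only [listMin_eq_min' hls hs] using ctreeL_eq_node htree
  refine le_trans (Finset.card_le_card_of_injOn
    (t := U.powersetCard L.size |>.biUnion fun T =>
      treeArrangements T L ×ˢ treeArrangements (U \ T) R)
    (fun l => (l.take L.size, l.drop (L.size + 1))) ?_ ?_) ?_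
  · intro l hl
    obtain ⟨heq, hL, hR⟩ := hsplit l hl
    obtain ⟨hnd, hls, -⟩ := mem_treeArrangements.1 hl
    rw [← heq] at hnd hls
    have hU : U = (l.take L.size ++ m :: l.drop (L.size + 1)).toFinset.erase m := by rw [hls]
    simp only [Finset.coe_biUnion, Finset.mem_coe, Set.mem_iUnion, Finset.mem_product,
      mem_treeArrangements, exists_prop]
    have hndp := hnd.sublist (List.sublist_append_left _ _)
    have hndq := hnd.sublist (List.sublist_append_right _ _) |>.of_cons
    refine ⟨_, Finset.mem_powersetCard.2 ⟨hU ▸ toFinset_subset_erase_of_nodup hnd, ?_⟩,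
      ⟨hndp, rfl, hL⟩, hndq, ?_, hR⟩
    · rw [List.toFinset_card_of_nodup hndp, ← size_ctreeL, hL]
    · rw [hU]; exact toFinset_eq_erase_sdiff_of_nodup hnd
  · intro l hl l' hl' h
    simp only [Prod.mk.injEq] at h
    rw [← (hsplit l hl).1, ← (hsplit l' hl').1, h.1, h.2]
  · refine Finset.card_biUnion_le.trans (Finset.sum_le_sum fun T _ => ?_)
    rw [Finset.card_product]

theorem card_treeArrangements_mul_hookProd_le (A : BTree) (s : Finset ℤ) :
    (treeArrangements s A).card * hookProd A ≤ s.card ! := by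
  induction A generalizing s with
  | nil => simpa [hookProd] using (card_treeArrangements_nil_le_one s).trans s.card.factorial_pos
  | node L R ihL ihR =>
    by_cases hcard : s.card = L.size + R.size + 1
    swap
    · simp [treeArrangements_eq_empty (A := .node L R) hcard]
    have hs : s.Nonempty := Finset.card_pos.1 (by omega)
    set U := s.erase (s.min' hs)
    have hU : U.card = L.size + R.size := by
      rw [Finset.card_erase_of_mem (s.min'_mem hs)]; omega
    calc (treeArrangements s (.node L R)).card * hookProd (.node L R)
        ≤ (∑ T ∈ U.powersetCard L.size,
            (treeArrangements T L).card * (treeArrangements (U \ T) R).card) *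
            ((L.size + R.size + 1) * hookProd L * hookProd R) :=
          Nat.mul_le_mul_right _ (card_treeArrangements_node_le hs L R)
      _ = ∑ T ∈ U.powersetCard L.size, (L.size + R.size + 1) *
            ((treeArrangements T L).card * hookProd L *
              ((treeArrangements (U \ T) R).card * hookProd R)) := by
          rw [Finset.sum_mul]; exact Finset.sum_congr rfl fun _ _ => by ring
      _ ≤ ∑ T ∈ U.powersetCard L.size, (L.size + R.size + 1) * (L.size ! * R.size !) := by
          refine Finset.sum_le_sum fun T hT => ?_
          obtain ⟨hTU, hT⟩ := Finset.mem_powersetCard.1 hT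
          have hUT : (U \ T).card = R.size := by
            rw [Finset.card_sdiff_of_subset hTU]; omega
          exact Nat.mul_le_mul_left _ (Nat.mul_le_mul (hT ▸ ihL T) (hUT ▸ ihR (U \ T)))
      _ = s.card ! := by
          rw [Finset.sum_const, Finset.card_powersetCard, hU, hcard, smul_eq_mul,
            Nat.factorial_succ, ← Nat.add_choose_mul_factorial_mul_factorial, Nat.choose_symm_add]
          ring

theorem permCount_mul_hookProd_le (n : ℕ) (A : BTree) : permCount n A * hookProd A ≤ n ! := by
  set s := Finset.univ.image fun k : Fin n => ((k : ℕ) : ℤ) + 1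
  have hinj : Function.Injective fun k : Fin n => ((k : ℕ) : ℤ) + 1 := fun k k' h => by
    simpa [Fin.val_inj] using h
  have hs : s.card = n := by rw [Finset.card_image_of_injective _ hinj, Finset.card_fin]
  have hle : permCount n A ≤ (treeArrangements s A).card := by
    rw [permCount, ← Set.ncard_coe_finset]
    refine Set.ncard_le_ncard_of_injOn (fun σ => List.ofFn fun k => ((σ k : ℕ) : ℤ) + 1)
      (fun σ hσ => ?_) (fun σ _ σ' _ h => ?_) (Finset.finite_toSet _)
    · refine mem_treeArrangements.2 ⟨List.nodup_ofFn.2 (hinj.comp σ.injective), ?_, hσ⟩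
      ext x
      simp only [s, List.mem_toFinset, List.mem_ofFn, Finset.mem_image, Finset.mem_univ, true_and]
      exact σ.surjective.exists (p := fun v => ((v : ℕ) : ℤ) + 1 = x) |>.symm
    · exact Equiv.ext fun k => hinj (congrFun (List.ofFn_injective h) k)
  exact (Nat.mul_le_mul_right _ hle).trans (hs ▸ card_treeArrangements_mul_hookProd_le A s)

lemma hookProd_node (L R : BTree) :
    hookProd (.node L R) = (L.size + R.size + 1) * hookProd L * hookProd R := rfl

lemma hookProd_pos (A : BTree) : 0 < hookProd A := by
  induction A with
  | nil => exact Nat.one_pos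
  | node L R ihL ihR => rw [hookProd_node]; positivity

lemma size_le_hookProd (A : BTree) : A.size ≤ hookProd A := by
  cases A with
  | nil => exact Nat.zero_le _
  | node L R =>
    rw [hookProd_node]
    exact Nat.le_mul_of_pos_right _ (hookProd_pos R) |>.trans'
      (Nat.le_mul_of_pos_right _ (hookProd_pos L))

lemma size_mul_size_sub_one_le_two_mul_hookProd (A : BTree) :
    (A.size : ℤ) * (A.size - 1) ≤ 2 * hookProd A := by
  cases A with
  | nil => simp [hookProd, BTree.size]
  | node L R =>
    have hL : (L.size : ℤ) ≤ hookProd L := by exact_mod_cast size_le_hookProd L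
    have hR : (R.size : ℤ) ≤ hookProd R := by exact_mod_cast size_le_hookProd R
    have hL1 : (1 : ℤ) ≤ hookProd L := by exact_mod_cast hookProd_pos L
    have hR1 : (1 : ℤ) ≤ hookProd R := by exact_mod_cast hookProd_pos R
    rw [hookProd_node, BTree.size]
    push_cast
    nlinarith [mul_le_mul hL hR1 zero_le_one (by positivity),
      mul_le_mul hL1 hR (by positivity) (by positivity)]

lemma size_mul_sub_two_mul_sub_three_le_four_mul_hookProd (A : BTree) :
    (A.size : ℤ) * (A.size - 2) * (A.size - 3) ≤ 4 * hookProd A := by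
  cases A with
  | nil => simp [hookProd, BTree.size]
  | node L R =>
    have hL : (L.size : ℤ) ≤ hookProd L := by exact_mod_cast size_le_hookProd L
    have hR : (R.size : ℤ) ≤ hookProd R := by exact_mod_cast size_le_hookProd R
    have hL1 : (1 : ℤ) ≤ hookProd L := by exact_mod_cast hookProd_pos L
    have hR1 : (1 : ℤ) ≤ hookProd R := by exact_mod_cast hookProd_pos R
    have hL2 := size_mul_size_sub_one_le_two_mul_hookProd L
    have hR2 := size_mul_size_sub_one_le_two_mul_hookProd R
    rw [hookProd_node, BTree.size]
    push_cast
    set a : ℤ := (L.size : ℤ)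
    set b : ℤ := (R.size : ℤ)
    set x : ℤ := (hookProd L : ℤ)
    set y : ℤ := (hookProd R : ℤ)
    have ha : 0 ≤ a := by positivity
    have hb : 0 ≤ b := by positivity
    suffices key : (a + b - 1) * (a + b - 2) ≤ 4 * x * y by
      nlinarith [mul_le_mul_of_nonneg_left key (by positivity : 0 ≤ a + b + 1)]
    rcases ha.eq_or_lt with ha | ha
    · rw [← ha]
      nlinarith [mul_le_mul hL1 hR1 zero_le_one (by positivity)]
    rcases hb.eq_or_lt with hb | hb
    · rw [← hb]
      nlinarith [mul_le_mul hL1 hR1 zero_le_one (by positivity)]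
    have hab : a + b - 1 ≤ a * b := by nlinarith
    nlinarith [mul_le_mul_of_nonneg_right hab (by omega : 0 ≤ a + b - 2),
      mul_le_mul_of_nonneg_right hL2 hb.le, mul_le_mul_of_nonneg_left hR (by omega : 0 ≤ 2 * x),
      mul_le_mul_of_nonneg_left hR2 ha.le, mul_le_mul_of_nonneg_right hL (by omega : 0 ≤ 2 * y)]

theorem stmt14 (j : ℕ) (hj : 4 ≤ j) (A : BTree) (hA : A.size = j) :
    (permCount j A : ℝ) / (Nat.factorial j : ℝ) ≤
      4 / ((j : ℝ) * ((j : ℝ) - 2) * ((j : ℝ) - 3)) := by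
  subst hA
  have hcount : (permCount A.size A : ℝ) * hookProd A ≤ A.size ! := by
    exact_mod_cast permCount_mul_hookProd_le A.size A
  have hhook : (A.size : ℝ) * (A.size - 2) * (A.size - 3) ≤ 4 * hookProd A := by
    exact_mod_cast size_mul_sub_two_mul_sub_three_le_four_mul_hookProd A
  have hj' : (4 : ℝ) ≤ A.size := by exact_mod_cast hj
  have hpos : (0 : ℝ) < A.size * (A.size - 2) * (A.size - 3) :=
    mul_pos (mul_pos (by linarith) (by linarith)) (by linarith)
  rw [div_le_div_iff₀ (by positivity) hpos]
  calc (permCount A.size A : ℝ) * (A.size * (A.size - 2) * (A.size - 3))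
      ≤ permCount A.size A * (4 * hookProd A) := by gcongr
    _ ≤ 4 * A.size ! := by linarith
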